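/- arXiv:1312.0898 — 5 statements merged into one kernel-verified Lean document; each statement's English description precedes it below -/
import Mathlib

section
/- Let B and C be n×n matrices over a field F with C invertible. Suppose that B·C⁻¹ has n distinct eigenvalues over the algebraic closure of F, and that for all x, y in the algebraic closure, the transpose of the left kernel of Bx − Cy equals its right kernel. Then B and C are symmetric matrices. -/
open Matrix Polynomial

/-!
The eigenvectors `v_μ` of `C⁻¹ * B` (which has the same characteristic polynomial as `B * C⁻¹`)
form a basis and satisfy `B v_μ = μ C v_μ`; the kernel hypothesis turns this into
`v_μᵀ B = μ v_μᵀ C`. Comparing the two expressions for `v_μᵀ B v_ν` gives `v_μᵀ C v_ν = 0`,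
hence also `v_μᵀ B v_ν = 0`, for `μ ≠ ν`. So the bilinear forms of `B` and `C` are diagonal in
this basis, hence symmetric. Working over the algebraic closure, symmetry descends to `F`.
-/

open Module in
theorem Module.End.exists_basis_eigenvectors_of_roots_charpoly
    {K V : Type*} [Field K] [DecidableEq K] [AddCommGroup V] [Module K V] [FiniteDimensional K V]
    (f : End K V)
    (hcard : f.charpoly.roots.card = finrank K V) (hnodup : f.charpoly.roots.Nodup) :
    ∃ b : Basis f.charpoly.roots.toFinset K V, ∀ μ, f (b μ) = (μ : K) • b μ := by
  have hev (μ : f.charpoly.roots.toFinset) : f.HasEigenvalue μ :=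
    (hasEigenvalue_iff_isRoot_charpoly f μ).2 <| isRoot_of_mem_roots <| Multiset.mem_toFinset.1 μ.2
  choose v hv using fun μ ↦ (hev μ).exists_hasEigenvector
  have hli : LinearIndependent K v :=
    f.eigenvectors_linearIndependent' _ Subtype.val_injective v hv
  have hcard' : Fintype.card f.charpoly.roots.toFinset = finrank K V := by
    rw [Fintype.card_coe, Multiset.toFinset_card_of_nodup hnodup, hcard]
  refine ⟨basisOfLinearIndependentOfCardEqFinrank' v hli hcard', fun μ ↦ ?_⟩
  rw [coe_basisOfLinearIndependentOfCardEqFinrank']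
  exact (hv μ).apply_eq_smul

namespace Matrix

variable {n : Type*} [Fintype n]

theorem isSymm_of_basis_orthogonal {R ι : Type*} [CommRing R] (b : Module.Basis ι R (n → R))
    {M : Matrix n n R} (h : ∀ i j, i ≠ j → b i ⬝ᵥ M *ᵥ b j = 0) : M.IsSymm := by
  classical
  rw [← isSymm_toBilin'_iff_isSymm, LinearMap.BilinForm.isSymm_iff_basis b]
  intro i j
  simp only [toBilin'_apply']
  rcases eq_or_ne i j with rfl | hij
  · rfl
  · rw [h i j hij, h j i hij.symm]

theorem dotProduct_mulVec_eq_zero_of_eigenvalue_ne {R : Type*} [CommRing R] [NoZeroDivisors R]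
    {B C : Matrix n n R} {v w : n → R} {μ ν : R} (hv : B *ᵥ v = μ • (C *ᵥ v))
    (hw : w ᵥ* B = ν • (w ᵥ* C)) (hne : μ ≠ ν) : w ⬝ᵥ C *ᵥ v = 0 := by
  have h : μ * (w ⬝ᵥ C *ᵥ v) = ν * (w ⬝ᵥ C *ᵥ v) := by
    calc μ * (w ⬝ᵥ C *ᵥ v) = w ⬝ᵥ B *ᵥ v := by rw [hv, dotProduct_smul, smul_eq_mul]
      _ = ν * (w ⬝ᵥ C *ᵥ v) := by
        rw [dotProduct_mulVec, hw, smul_dotProduct, smul_eq_mul, ← dotProduct_mulVec]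
  exact by_contra fun h0 ↦ hne (mul_right_cancel₀ h0 h)

variable [DecidableEq n] {K : Type*} [Field K]

theorem isSymm_and_isSymm_of_ker_pencil_subset {B C : Matrix n n K} (hC : IsUnit C)
    (hcard : (B * C⁻¹).charpoly.roots.card = Fintype.card n)
    (hnodup : (B * C⁻¹).charpoly.roots.Nodup)
    (hker : ∀ (μ : K) (v : n → K), (B - μ • C) *ᵥ v = 0 → v ᵥ* (B - μ • C) = 0) :
    B.IsSymm ∧ C.IsSymm := by
  classical
  have hD : (C⁻¹ * B).toLin'.charpoly = (B * C⁻¹).charpoly := by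
    rw [charpoly_toLin', charpoly_mul_comm]
  obtain ⟨b, hb⟩ := Module.End.exists_basis_eigenvectors_of_roots_charpoly (C⁻¹ * B).toLin'
    (by rw [hD, hcard, Module.finrank_fintype_fun_eq_card]) (by rwa [hD])
  have hright (μ) : B *ᵥ b μ = (μ : K) • (C *ᵥ b μ) := by
    rw [← mulVec_smul, ← hb μ, toLin'_apply, mulVec_mulVec,
      mul_nonsing_inv_cancel_left _ _ ((isUnit_iff_isUnit_det C).1 hC)]
  have hleft (μ) : b μ ᵥ* B = (μ : K) • (b μ ᵥ* C) := by
    have := hker μ (b μ) (by rw [sub_mulVec, smul_mulVec, hright, sub_self])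
    rwa [vecMul_sub, vecMul_smul, sub_eq_zero] at this
  have horthC (μ ν) (hne : μ ≠ ν) : b μ ⬝ᵥ C *ᵥ b ν = 0 :=
    dotProduct_mulVec_eq_zero_of_eigenvalue_ne (hright ν) (hleft μ)
      (Subtype.coe_ne_coe.2 hne.symm)
  refine ⟨isSymm_of_basis_orthogonal b fun μ ν hne ↦ ?_, isSymm_of_basis_orthogonal b horthC⟩
  rw [hright, dotProduct_smul, horthC μ ν hne, smul_zero]

end Matrix

/-- If `C` is invertible, `B * C⁻¹` has `n` distinct eigenvalues over the algebraic
closure, and for all scalars `x, y` in the algebraic closure the left kernel of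
`x•B - y•C` (transposed) equals its right kernel, then `B` and `C` are symmetric. -/
theorem stmt0 (F : Type*) [Field F] (n : ℕ) (B C : Matrix (Fin n) (Fin n) F)
    (hC : IsUnit C)
    (hcard : ((B * C⁻¹).map (algebraMap F (AlgebraicClosure F))).charpoly.roots.card = n)
    (hnodup : ((B * C⁻¹).map (algebraMap F (AlgebraicClosure F))).charpoly.roots.Nodup)
    (hker : ∀ (x y : AlgebraicClosure F) (v : Fin n → AlgebraicClosure F),
      Matrix.vecMul v (x • B.map (algebraMap F (AlgebraicClosure F)) -
        y • C.map (algebraMap F (AlgebraicClosure F))) = 0 ↔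
      Matrix.mulVec (x • B.map (algebraMap F (AlgebraicClosure F)) -
        y • C.map (algebraMap F (AlgebraicClosure F))) v = 0) :
    B.IsSymm ∧ C.IsSymm := by
  set f := algebraMap F (AlgebraicClosure F)
  have hinv : (C.map f)⁻¹ = C⁻¹.map f := inv_eq_right_inv <| by
    rw [← Matrix.map_mul, mul_nonsing_inv _ ((isUnit_iff_isUnit_det C).1 hC),
      Matrix.map_one _ f.map_zero f.map_one]
  have hCf : IsUnit (C.map f) := hC.map f.mapMatrix
  rw [Matrix.map_mul, ← hinv] at hcard hnodup
  obtain ⟨hB, hC⟩ := isSymm_and_isSymm_of_ker_pencil_subset hCf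
    (by rw [hcard, Fintype.card_fin]) hnodup fun μ v hv ↦ by
      simpa using (hker 1 μ v).2 (by simpa using hv)
  exact ⟨(isSymm_map_iff f.injective).1 hB, (isSymm_map_iff f.injective).1 hC⟩
end

section
/- Let L be the rank-4 lattice with Gram matrix having 0 on the diagonal and 2 in every off-diagonal entry (in basis L₁, L₂, L₃, L₄). Let g be an isometry of L fixing L₁, L₂, L₃. Writing g(L₄) = aL₁ + bL₂ + cL₃ + dL₄ with integers a,b,c,d, then a = b = c, d = 1 − 2a, and either (a,d) = (0,1) (so g is the identity) or d = −1 and a = 1. -/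
/-!
The Gram matrix is `2(J - I)`, so `B(u, v) = 2 (Σu · Σv - u ⬝ v)`. Pairing `w = g L₄` with the
fixed vectors `Lᵢ` (`i ≤ 3`) gives `Σw - wᵢ = 1`, hence `a = b = c` and `d = 1 - 2a`; the
isotropy `B(w, w) = B(L₄, L₄) = 0` then reduces to `6a(a - 1) = 0`. When `a = 0`, `g` fixes
the whole standard basis.
-/

open Matrix

section HollowGram

variable {ι R : Type*} [Fintype ι] [DecidableEq ι] [CommRing R]

theorem dotProduct_mulVec_hollowGram (u v : ι → R) :
    u ⬝ᵥ (of (fun i j : ι => if i = j then (0 : R) else 2) *ᵥ v) =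
      2 * ((∑ i, u i) * (∑ i, v i) - u ⬝ᵥ v) := by
  have hM : of (fun i j : ι => if i = j then (0 : R) else 2) =
      (2 : R) • (of fun _ _ => (1 : R)) - (2 : R) • (1 : Matrix ι ι R) := by
    ext i j
    by_cases h : i = j <;> simp [h, one_apply]
  rw [hM, sub_mulVec, smul_mulVec, smul_mulVec, one_mulVec, dotProduct_sub, dotProduct_smul,
    dotProduct_smul]
  simp [mulVec, dotProduct, Finset.sum_mul, mul_sub]

theorem dotProduct_mulVec_hollowGram_single (u : ι → R) (j : ι) :
    u ⬝ᵥ (of (fun i j : ι => if i = j then (0 : R) else 2) *ᵥ Pi.single j 1) =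
      2 * ((∑ i, u i) - u j) := by
  rw [dotProduct_mulVec_hollowGram]
  simp

end HollowGram

theorem linearEquiv_eq_refl_of_map_single {ι R : Type*} [Finite ι] [DecidableEq ι] [Semiring R]
    (g : (ι → R) ≃ₗ[R] (ι → R)) (h : ∀ i, g (Pi.single i 1) = Pi.single i 1) :
    g = LinearEquiv.refl R _ :=
  (Pi.basisFun R ι).ext' (by simpa using h)

theorem coeffs_of_sum_sub_eq_one_of_isotropic {a b c d : ℤ}
    (ha : a + b + c + d - a = 1) (hb : a + b + c + d - b = 1) (hc : a + b + c + d - c = 1)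
    (hq : (a + b + c + d) * (a + b + c + d) - (a * a + b * b + c * c + d * d) = 0) :
    a = b ∧ b = c ∧ d = 1 - 2 * a ∧ (a = 0 ∨ a = 1) := by
  have hab : a = b := by linarith
  have hbc : b = c := by linarith
  have hd : d = 1 - 2 * a := by linarith
  subst hab hbc hd
  have : a * (a - 1) = 0 := by nlinarith
  rcases mul_eq_zero.mp this with h | h
  · exact ⟨rfl, rfl, rfl, .inl h⟩
  · exact ⟨rfl, rfl, rfl, .inr (by linarith)⟩

/-- An isometry `g` of the rank-4 lattice with Gram matrix 0 on the diagonal and 2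
off-diagonal, fixing `L₁, L₂, L₃`, with `g(L₄) = aL₁ + bL₂ + cL₃ + dL₄`, satisfies
`a = b = c`, `d = 1 − 2a`, and either `(a,d) = (0,1)` (so `g` is the identity) or
`d = −1` and `a = 1`. -/
theorem stmt5 (g : (Fin 4 → ℤ) ≃ₗ[ℤ] (Fin 4 → ℤ))
    (Q : Matrix (Fin 4) (Fin 4) ℤ)
    (hQ : Q = Matrix.of fun i j => if i = j then 0 else 2)
    (hg : ∀ u v : Fin 4 → ℤ,
      dotProduct (g u) (Q.mulVec (g v)) = dotProduct u (Q.mulVec v))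
    (h1 : g (Pi.single 0 1) = Pi.single 0 1)
    (h2 : g (Pi.single 1 1) = Pi.single 1 1)
    (h3 : g (Pi.single 2 1) = Pi.single 2 1)
    (a b c d : ℤ) (h4 : g (Pi.single 3 1) = ![a, b, c, d]) :
    a = b ∧ b = c ∧ d = 1 - 2 * a ∧
      ((a = 0 ∧ d = 1 ∧ g = LinearEquiv.refl ℤ (Fin 4 → ℤ)) ∨ (d = -1 ∧ a = 1)) := by
  subst hQ
  have pairing_fixed (i : Fin 4) (hi3 : i ≠ 3) (hi : g (Pi.single i 1) = Pi.single i 1) :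
      a + b + c + d - ![a, b, c, d] i = 1 := by
    have h := hg (Pi.single 3 1) (Pi.single i 1)
    rw [h4, hi, dotProduct_mulVec_hollowGram_single, dotProduct_mulVec_hollowGram_single,
      Pi.single_apply, if_neg hi3] at h
    simpa [Fin.sum_univ_four] using h
  have isotropic :
      (a + b + c + d) * (a + b + c + d) - (a * a + b * b + c * c + d * d) = 0 := by
    have h := hg (Pi.single 3 1) (Pi.single 3 1)
    rw [h4, dotProduct_mulVec_hollowGram, dotProduct_mulVec_hollowGram] at h
    simpa [Fin.sum_univ_four, dotProduct] using h
  obtain ⟨hab, hbc, hd, ha⟩ := coeffs_of_sum_sub_eq_one_of_isotropic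
    (pairing_fixed 0 (by decide) h1) (pairing_fixed 1 (by decide) h2)
    (pairing_fixed 2 (by decide) h3) isotropic
  refine ⟨hab, hbc, hd, ha.imp (fun ha0 => ⟨ha0, by omega, ?_⟩) (fun ha1 => ⟨by omega, ha1⟩)⟩
  have h4' : g (Pi.single 3 1) = Pi.single 3 1 := by
    rw [h4]
    ext i
    fin_cases i <;> simp <;> omega
  exact linearEquiv_eq_refl_of_map_single g fun i => by fin_cases i; exacts [h1, h2, h3, h4']
end

section
/- Let γ₁ = ((1,0,0,0),(2,−1,2,0),(6,−2,3,0),(4,−2,2,1)) and γ₂ = ((1,−2,2,4),(0,−1,2,2),(0,−2,3,6),(0,0,0,1)) as 4×4 integer matrices. Then for every integer k ≥ 0, the characteristic polynomial of γ₁ᵏγ₂ is divisible by x² − (4(2k+1)² − 2)x + 1. -/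
open Matrix Polynomial

private lemma pow_eq (k : ℕ) :
    (!![(1 : ℤ), 0, 0, 0; 2, -1, 2, 0; 6, -2, 3, 0; 4, -2, 2, 1]) ^ k =
      !![(1 : ℤ), 0, 0, 0;
         2*k*(2*k-1), -(2*k-1), 2*k, 0;
         2*k*(2*k+1), -(2*k), 2*k+1, 0;
         4*k^2, -(2*k), 2*k, 1] := by
  induction k with
  | zero =>
    ext i j
    fin_cases i <;> fin_cases j <;>
      simp [Matrix.one_apply, Matrix.vecHead, Matrix.vecTail]
  | succ n ih =>
    rw [pow_succ, ih]
    ext i j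
    fin_cases i <;> fin_cases j <;>
      simp [Matrix.mul_apply, Fin.sum_univ_four, Matrix.vecHead, Matrix.vecTail] <;> ring

private lemma prod_eq (k : ℕ) :
    (!![(1 : ℤ), 0, 0, 0; 2, -1, 2, 0; 6, -2, 3, 0; 4, -2, 2, 1]) ^ k *
        !![(1 : ℤ), -2, 2, 4; 0, -1, 2, 2; 0, -2, 3, 6; 0, 0, 0, 1] =
      !![(1 : ℤ), -2, 2, 4;
         4*k^2-2*k, -8*k^2+2*k-1, 8*k^2-2*k+2, 16*k^2+2;
         4*k^2+2*k, -8*k^2-6*k-2, 8*k^2+6*k+3, 16*k^2+16*k+6;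
         4*k^2, -8*k^2-2*k, 8*k^2+2*k, 16*k^2+8*k+1] := by
  rw [pow_eq]
  ext i j
  fin_cases i <;> fin_cases j <;>
    simp [Matrix.mul_apply, Fin.sum_univ_four, Matrix.vecHead, Matrix.vecTail] <;> ring

private lemma charmatrix_fin_four (a b c d e f g h i j l m n o p q : ℤ) :
    charmatrix !![a, b, c, d; e, f, g, h; i, j, l, m; n, o, p, q] =
      !![X - C a, -C b, -C c, -C d;
         -C e, X - C f, -C g, -C h;
         -C i, -C j, X - C l, -C m;
         -C n, -C o, -C p, X - C q] := by
  ext x y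
  fin_cases x <;> fin_cases y <;>
    simp [charmatrix_apply, Matrix.one_apply, Matrix.vecHead, Matrix.vecTail]

private lemma det_fin_four' (a b c d e f g h i j l m n o p q : Polynomial ℤ) :
    Matrix.det !![a, b, c, d; e, f, g, h; i, j, l, m; n, o, p, q] =
      a*(f*(l*q-m*p) - g*(j*q-m*o) + h*(j*p-l*o))
      - b*(e*(l*q-m*p) - g*(i*q-m*n) + h*(i*p-l*n))
      + c*(e*(j*q-m*o) - f*(i*q-m*n) + h*(i*o-j*n))
      - d*(e*(j*p-l*o) - f*(i*p-l*n) + g*(i*o-j*n)) := by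
  rw [Matrix.det_succ_row_zero]
  simp [Fin.sum_univ_succ, Matrix.det_fin_three, Fin.succAbove,
    Fin.castSucc, Fin.castAdd, Fin.castLE, Matrix.vecHead, Matrix.vecTail]
  ring

set_option maxHeartbeats 1000000 in
/-- For γ₁, γ₂ as below and every k ≥ 0, the characteristic polynomial of γ₁ᵏ·γ₂ is
divisible by x² − (4(2k+1)² − 2)x + 1. -/
theorem stmt8 (k : ℕ) :
    (X ^ 2 - C (4 * (2 * (k : ℤ) + 1) ^ 2 - 2) * X + 1 : Polynomial ℤ) ∣
      ((!![(1 : ℤ), 0, 0, 0; 2, -1, 2, 0; 6, -2, 3, 0; 4, -2, 2, 1]) ^ k *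
        !![(1 : ℤ), -2, 2, 4; 0, -1, 2, 2; 0, -2, 3, 6; 0, 0, 0, 1]).charpoly := by
  refine ⟨(X - 1) ^ 2, ?_⟩
  rw [prod_eq, Matrix.charpoly, charmatrix_fin_four, det_fin_four']
  simp only [map_sub, map_add, _root_.map_mul, map_pow, map_neg, _root_.map_one, map_ofNat]
  ring
end

section
/- For every squarefree integer D > 1, there exist positive integers m and n with m odd such that m² − D·n² = 1. Consequently, for every real quadratic field ℚ(√D) there exists a positive integer k such that the polynomial x² − (4(2k+1)² − 2)x + 1 is irreducible with splitting field ℚ(√D). -/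
/-!
Pell's equation gives x > 1, y > 0 with x² − Dy² = 1. Squaring x + y√D yields the solution
m + n√D with m = 2x² − 1 = 2(x² − 1) + 1 odd and n = 2xy. Squaring once more, M = 2m² − 1 and
N = 2mn again satisfy M² − DN² = 1, and X² − (4m² − 2)X + 1 = X² − 2MX + 1 has the roots
M ± N√D. These are irrational because D is not a square, so the quadratic is irreducible, and
they generate ℚ(√D).
-/

open Polynomial

theorem Squarefree.isUnit_of_isSquare {M : Type*} [Monoid M] {a : M} (hsq : Squarefree a)
    (ha : IsSquare a) : IsUnit a := by
  obtain ⟨r, rfl⟩ := ha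
  exact (hsq r dvd_rfl).mul (hsq r dvd_rfl)

-- `(2x² − 1) + 2xy√d = (x + y√d)²`
theorem sq_two_mul_sq_sub_one_sub_mul_sq_eq_one {R : Type*} [CommRing R] {d x y : R}
    (h : x ^ 2 - d * y ^ 2 = 1) : (2 * x ^ 2 - 1) ^ 2 - d * (2 * x * y) ^ 2 = 1 := by
  linear_combination (4 * x ^ 2) * h

theorem natDegree_X_sq_sub_C_mul_X_add_one {R : Type*} [CommRing R] [Nontrivial R] (c : R) :
    (X ^ 2 - C c * X + 1 : R[X]).natDegree = 2 := by
  compute_degree!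

theorem X_sq_sub_two_mul_X_add_one_eq_mul {R : Type*} [CommRing R] {d a b s : R}
    (hs : s ^ 2 = d) (h : a ^ 2 - d * b ^ 2 = 1) :
    (X ^ 2 - C (2 * a) * X + 1 : R[X]) = (X - C (a + b * s)) * (X - C (a - b * s)) := by
  have hprod : (a + b * s) * (a - b * s) = 1 := by linear_combination h - b ^ 2 * hs
  calc (X ^ 2 - C (2 * a) * X + 1 : R[X])
      = X ^ 2 - C ((a + b * s) + (a - b * s)) * X + C ((a + b * s) * (a - b * s)) := by
        rw [hprod, C_1]; ring_nf
    _ = _ := by simp only [C_add, C_mul]; ring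

theorem irreducible_X_sq_sub_two_mul_X_add_one {K : Type*} [Field K] {d a b : K}
    (h : a ^ 2 - d * b ^ 2 = 1) (hb : b ≠ 0) (hd : ¬IsSquare d) :
    Irreducible (X ^ 2 - C (2 * a) * X + 1 : K[X]) := by
  refine irreducible_of_degree_le_three_of_not_isRoot
    (by rw [natDegree_X_sq_sub_C_mul_X_add_one]; decide) fun r hr => hd ⟨(r - a) / b, ?_⟩
  have hroot : r ^ 2 - 2 * a * r + 1 = 0 := by simpa using hr
  field_simp
  linear_combination -hroot - h

theorem isSplittingField_adjoin_sqrt {K L : Type*} [Field K] [Field L] [Algebra K L]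
    {d a b : K} {s : L} (hs : s ^ 2 = algebraMap K L d) (h : a ^ 2 - d * b ^ 2 = 1)
    (hb : b ≠ 0) :
    IsSplittingField K (IntermediateField.adjoin K {s}) (X ^ 2 - C (2 * a) * X + 1) := by
  set p : K[X] := X ^ 2 - C (2 * a) * X + 1
  set α : L := algebraMap K L a + algebraMap K L b * s
  set β : L := algebraMap K L a - algebraMap K L b * s
  have hfac : p.map (algebraMap K L) = (X - C α) * (X - C β) := by
    rw [← X_sq_sub_two_mul_X_add_one_eq_mul hs (by simpa using congrArg (algebraMap K L) h)]
    simp [p, map_ofNat]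
  have hp0 : p ≠ 0 := ne_zero_of_natDegree_gt (n := 0) (by
    rw [natDegree_X_sq_sub_C_mul_X_add_one]; decide)
  have hroots : ∀ r : L, r ∈ p.rootSet L ↔ r = α ∨ r = β := by
    intro r
    rw [mem_rootSet, aeval_def, ← eval_map, hfac]
    simp [hp0, sub_eq_zero]
  have hsplits : (p.map (algebraMap K L)).Splits := by
    rw [hfac]
    exact (Splits.X_sub_C _).mul (Splits.X_sub_C _)
  suffices hadj : IntermediateField.adjoin K {s} = IntermediateField.adjoin K (p.rootSet L) by
    rw [hadj]
    exact IntermediateField.adjoin_rootSet_isSplittingField hsplits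
  refine le_antisymm ?_ ?_
  · rw [IntermediateField.adjoin_le_iff, Set.singleton_subset_iff]
    have hα : α ∈ IntermediateField.adjoin K (p.rootSet L) :=
      IntermediateField.subset_adjoin K _ ((hroots α).2 (Or.inl rfl))
    have hs : s = algebraMap K L b⁻¹ * (α - algebraMap K L a) := by
      simp [α, hb]
    rw [hs]
    exact mul_mem (IntermediateField.algebraMap_mem _ _)
      (sub_mem hα (IntermediateField.algebraMap_mem _ _))
  · rw [IntermediateField.adjoin_le_iff]
    have hsmem := IntermediateField.mem_adjoin_simple_self K s
    rintro r hr
    rcases (hroots r).1 hr with rfl | rfl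
    · exact add_mem (IntermediateField.algebraMap_mem _ _)
        (mul_mem (IntermediateField.algebraMap_mem _ _) hsmem)
    · exact sub_mem (IntermediateField.algebraMap_mem _ _)
        (mul_mem (IntermediateField.algebraMap_mem _ _) hsmem)

/-- For every squarefree integer D > 1 there are positive integers m, n with m odd and
m² − Dn² = 1; consequently there is a positive integer k such that
x² − (4(2k+1)² − 2)x + 1 is irreducible over ℚ with splitting field ℚ(√D). -/
theorem stmt9 (D : ℤ) (hD : 1 < D) (hsq : Squarefree D) :
    (∃ m n : ℤ, 0 < m ∧ 0 < n ∧ Odd m ∧ m ^ 2 - D * n ^ 2 = 1) ∧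
    ∃ k : ℕ, 0 < k ∧
      Irreducible (X ^ 2 - C (4 * (2 * (k : ℚ) + 1) ^ 2 - 2) * X + 1 : Polynomial ℚ) ∧
      Polynomial.IsSplittingField ℚ ↥(IntermediateField.adjoin ℚ {Real.sqrt (D : ℝ)})
        (X ^ 2 - C (4 * (2 * (k : ℚ) + 1) ^ 2 - 2) * X + 1) := by
  have hDns : ¬IsSquare D := fun hD' => by
    rcases Int.isUnit_iff.mp (hsq.isUnit_of_isSquare hD') with rfl | rfl <;> omega
  obtain ⟨a, hx, hy⟩ := Pell.Solution₁.exists_pos_of_not_isSquare (by omega) hDns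
  have hpell := sq_two_mul_sq_sub_one_sub_mul_sq_eq_one a.prop
  obtain ⟨k, hk⟩ : ∃ k : ℕ, (k : ℤ) = a.x ^ 2 - 1 := ⟨_, Int.toNat_of_nonneg (by nlinarith)⟩
  refine ⟨⟨_, _, by nlinarith, by positivity, ⟨a.x ^ 2 - 1, by ring⟩, hpell⟩, k, by nlinarith, ?_⟩
  set m : ℚ := 2 * k + 1
  set n : ℚ := 2 * a.x * a.y
  have hmn : m ^ 2 - D * n ^ 2 = 1 := by
    have hkQ : (k : ℚ) = a.x ^ 2 - 1 := by exact_mod_cast hk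
    have hm : m = 2 * a.x ^ 2 - 1 := by simp only [m, hkQ]; ring
    simp only [hm, n]
    exact_mod_cast hpell
  have hmn2 := sq_two_mul_sq_sub_one_sub_mul_sq_eq_one hmn
  have hb : 2 * m * n ≠ 0 := by simp only [m, n]; positivity
  have hs : Real.sqrt D ^ 2 = algebraMap ℚ ℝ D := by
    rw [Real.sq_sqrt (by positivity)]; simp
  rw [show 4 * m ^ 2 - 2 = 2 * (2 * m ^ 2 - 1) by ring]
  exact ⟨irreducible_X_sq_sub_two_mul_X_add_one hmn2 hb (by rwa [Rat.isSquare_intCast_iff]),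
    isSplittingField_adjoin_sqrt hs hmn2 hb⟩
end

section
/- Let D(v₁,v₁′,v₂,v₂′,v₃,v₃′) be the 4×4 determinant whose rows are (A₁,A₂,A₃,A₄) evaluated at (v₁,v₂,v₃), (v₁′,v₂,v₃), (v₁,v₂′,v₃), (v₁,v₂,v₃′), where each Aᵢ is a trilinear form on V₁ᵛ×V₂ᵛ×V₃ᵛ with each Vᵢ two-dimensional. Then D vanishes whenever v₁ and v₁′ are linearly dependent, whenever v₂ and v₂′ are linearly dependent, and whenever v₃ and v₃′ are linearly dependent; hence D is divisible by det(v₁,v₁′)·det(v₂,v₂′)·det(v₃,v₃′) as a polynomial. -/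
open Matrix

/-- The trilinear form with coefficients `a i`, evaluated over an `F`-algebra `R`. -/
def triForm {F R : Type*} [Field F] [CommRing R] [Algebra F R]
    (a : Fin 4 → Fin 2 → Fin 2 → Fin 2 → F) (i : Fin 4) (v w x : Fin 2 → R) : R :=
  ∑ p : Fin 2, ∑ q : Fin 2, ∑ r : Fin 2,
    algebraMap F R (a i p q r) * v p * w q * x r

/-- The 4×4 determinant `D(v₁,v₁′,v₂,v₂′,v₃,v₃′)` whose rows are `(A₁,…,A₄)` evaluated
at `(v₁,v₂,v₃)`, `(v₁′,v₂,v₃)`, `(v₁,v₂′,v₃)`, `(v₁,v₂,v₃′)`. -/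
def Dform {F R : Type*} [Field F] [CommRing R] [Algebra F R]
    (a : Fin 4 → Fin 2 → Fin 2 → Fin 2 → F)
    (v₁ v₁' v₂ v₂' v₃ v₃' : Fin 2 → R) : R :=
  Matrix.det (Matrix.of fun (row col : Fin 4) =>
    triForm a col (![v₁, v₁', v₁, v₁] row) (![v₂, v₂, v₂', v₂] row)
      (![v₃, v₃, v₃, v₃'] row))

/-- The 2×2 determinant of the coordinates of two vectors. -/
def det2 {R : Type*} [CommRing R] (v w : Fin 2 → R) : R := v 0 * w 1 - v 1 * w 0

/-! Each `vᵢ′` enters exactly one row of the determinant, and linearly, so `D` is trilinear in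
`(v₁′, v₂′, v₃′)`; when `vᵢ′` and `vᵢ` are proportional, so are that row and the first row.
For indeterminate coordinates, expand `D = ∑ u_p w_q x_r T_pqr`: vanishing at `vᵢ′ = vᵢ` says
that contracting the `i`-th slot of `T` with `vᵢ` gives zero. Since `vᵢ 1` is a prime not
dividing `vᵢ 0`, the only linear forms killing `vᵢ` are the multiples of `det2 vᵢ`, and peeling
off one slot at a time gives `T = G • det2 v₁ ⊗ det2 v₂ ⊗ det2 v₃`. -/

section Determinant

variable {n R : Type*} [Fintype n] [DecidableEq n] [CommRing R]

theorem Matrix.det_eq_zero_of_row_eq_smul {M : Matrix n n R} {i j : n} (hij : i ≠ j) (c : R)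
    (h : M i = c • M j) : M.det = 0 := by
  rw [← updateRow_eq_self i (A := M), h, det_updateRow_smul, det_updateRow_eq_zero hij.symm,
    mul_zero]

theorem Matrix.det_updateRow_sum_smul {ι : Type*} [Fintype ι] (M : Matrix n n R) (i : n)
    (c : ι → R) (u : ι → n → R) :
    (M.updateRow i (∑ k, c k • u k)).det = ∑ k, c k * (M.updateRow i (u k)).det := by
  simp only [← det_updateRow_smul]
  exact (detRowAlternating : (n → R) [⋀^n]→ₗ[R] R).map_update_sum _ i (fun k => c k • u k) M

end Determinant

section Forms

variable {F R : Type*} [Field F] [CommRing R] [Algebra F R] (a : Fin 4 → Fin 2 → Fin 2 → Fin 2 → F)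

theorem triForm_smul_left (c : R) (v w x : Fin 2 → R) (i : Fin 4) :
    triForm a i (c • v) w x = c * triForm a i v w x := by
  simp only [triForm, Fin.sum_univ_two, Pi.smul_apply, smul_eq_mul]; ring

theorem triForm_smul_mid (c : R) (v w x : Fin 2 → R) (i : Fin 4) :
    triForm a i v (c • w) x = c * triForm a i v w x := by
  simp only [triForm, Fin.sum_univ_two, Pi.smul_apply, smul_eq_mul]; ring

theorem triForm_smul_right (c : R) (v w x : Fin 2 → R) (i : Fin 4) :
    triForm a i v w (c • x) = c * triForm a i v w x := by
  simp only [triForm, Fin.sum_univ_two, Pi.smul_apply, smul_eq_mul]; ring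

theorem triForm_eq_sum_left (v w x : Fin 2 → R) (i : Fin 4) :
    triForm a i v w x = ∑ p, v p * triForm a i (Pi.single p 1) w x := by
  simp [triForm, Fin.sum_univ_two]; ring

theorem triForm_eq_sum_mid (v w x : Fin 2 → R) (i : Fin 4) :
    triForm a i v w x = ∑ q, w q * triForm a i v (Pi.single q 1) x := by
  simp [triForm, Fin.sum_univ_two]; ring

theorem triForm_eq_sum_right (v w x : Fin 2 → R) (i : Fin 4) :
    triForm a i v w x = ∑ r, x r * triForm a i v w (Pi.single r 1) := by
  simp [triForm, Fin.sum_univ_two]; ring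

def DformMatrix (v₁ v₁' v₂ v₂' v₃ v₃' : Fin 2 → R) : Matrix (Fin 4) (Fin 4) R :=
  Matrix.of fun row col =>
    triForm a col (![v₁, v₁', v₁, v₁] row) (![v₂, v₂, v₂', v₂] row) (![v₃, v₃, v₃, v₃'] row)

theorem Dform_eq_det (v₁ v₁' v₂ v₂' v₃ v₃' : Fin 2 → R) :
    Dform a v₁ v₁' v₂ v₂' v₃ v₃' = (DformMatrix a v₁ v₁' v₂ v₂' v₃ v₃').det :=
  rfl

theorem DformMatrix_updateRow_one (v₁ v₁' v₂ v₂' v₃ v₃' u : Fin 2 → R) :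
    (DformMatrix a v₁ v₁' v₂ v₂' v₃ v₃').updateRow 1 (fun col => triForm a col u v₂ v₃) =
      DformMatrix a v₁ u v₂ v₂' v₃ v₃' := by
  ext i j; fin_cases i <;> rfl

theorem DformMatrix_updateRow_two (v₁ v₁' v₂ v₂' v₃ v₃' w : Fin 2 → R) :
    (DformMatrix a v₁ v₁' v₂ v₂' v₃ v₃').updateRow 2 (fun col => triForm a col v₁ w v₃) =
      DformMatrix a v₁ v₁' v₂ w v₃ v₃' := by
  ext i j; fin_cases i <;> rfl

theorem DformMatrix_updateRow_three (v₁ v₁' v₂ v₂' v₃ v₃' x : Fin 2 → R) :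
    (DformMatrix a v₁ v₁' v₂ v₂' v₃ v₃').updateRow 3 (fun col => triForm a col v₁ v₂ x) =
      DformMatrix a v₁ v₁' v₂ v₂' v₃ x := by
  ext i j; fin_cases i <;> rfl

theorem Dform_eq_sum_left (v₁ u v₂ w v₃ x : Fin 2 → R) :
    Dform a v₁ u v₂ w v₃ x = ∑ p, u p * Dform a v₁ (Pi.single p 1) v₂ w v₃ x := by
  have hrow : (fun col => triForm a col u v₂ v₃) =
      ∑ p, u p • fun col => triForm a col (Pi.single p 1) v₂ v₃ := by
    ext col; simp [triForm_eq_sum_left a u v₂ v₃ col]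
  rw [Dform_eq_det, ← DformMatrix_updateRow_one a v₁ 0 v₂ w v₃ x u, hrow, det_updateRow_sum_smul]
  simp only [DformMatrix_updateRow_one, Dform_eq_det]

theorem Dform_eq_sum_mid (v₁ u v₂ w v₃ x : Fin 2 → R) :
    Dform a v₁ u v₂ w v₃ x = ∑ q, w q * Dform a v₁ u v₂ (Pi.single q 1) v₃ x := by
  have hrow : (fun col => triForm a col v₁ w v₃) =
      ∑ q, w q • fun col => triForm a col v₁ (Pi.single q 1) v₃ := by
    ext col; simp [triForm_eq_sum_mid a v₁ w v₃ col]
  rw [Dform_eq_det, ← DformMatrix_updateRow_two a v₁ u v₂ 0 v₃ x w, hrow, det_updateRow_sum_smul]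
  simp only [DformMatrix_updateRow_two, Dform_eq_det]

theorem Dform_eq_sum_right (v₁ u v₂ w v₃ x : Fin 2 → R) :
    Dform a v₁ u v₂ w v₃ x = ∑ r, x r * Dform a v₁ u v₂ w v₃ (Pi.single r 1) := by
  have hrow : (fun col => triForm a col v₁ v₂ x) =
      ∑ r, x r • fun col => triForm a col v₁ v₂ (Pi.single r 1) := by
    ext col; simp [triForm_eq_sum_right a v₁ v₂ x col]
  rw [Dform_eq_det, ← DformMatrix_updateRow_three a v₁ u v₂ w v₃ 0 x, hrow, det_updateRow_sum_smul]
  simp only [DformMatrix_updateRow_three, Dform_eq_det]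

theorem Dform_eq_sum (v₁ u v₂ w v₃ x : Fin 2 → R) :
    Dform a v₁ u v₂ w v₃ x = ∑ p, ∑ q, ∑ r,
      u p * w q * x r * Dform a v₁ (Pi.single p 1) v₂ (Pi.single q 1) v₃ (Pi.single r 1) := by
  rw [Dform_eq_sum_left]
  simp_rw [Dform_eq_sum_mid a v₁ _ v₂ w, Dform_eq_sum_right a v₁ _ v₂ _ v₃ x, Finset.mul_sum,
    ← mul_assoc]

theorem Dform_eq_zero_of_dependent_one {v₁ v₁' : Fin 2 → R} (v₂ v₂' v₃ v₃' : Fin 2 → R)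
    (h : ∃ c : R, v₁' = c • v₁ ∨ v₁ = c • v₁') : Dform a v₁ v₁' v₂ v₂' v₃ v₃' = 0 := by
  obtain ⟨c, rfl | rfl⟩ := h
  · exact det_eq_zero_of_row_eq_smul (i := 1) (j := 0) (by decide) c
      (funext (triForm_smul_left a c _ _ _))
  · exact det_eq_zero_of_row_eq_smul (i := 0) (j := 1) (by decide) c
      (funext (triForm_smul_left a c _ _ _))

theorem Dform_eq_zero_of_dependent_two {v₂ v₂' : Fin 2 → R} (v₁ v₁' v₃ v₃' : Fin 2 → R)
    (h : ∃ c : R, v₂' = c • v₂ ∨ v₂ = c • v₂') : Dform a v₁ v₁' v₂ v₂' v₃ v₃' = 0 := by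
  obtain ⟨c, rfl | rfl⟩ := h
  · exact det_eq_zero_of_row_eq_smul (i := 2) (j := 0) (by decide) c
      (funext (triForm_smul_mid a c _ _ _))
  · exact det_eq_zero_of_row_eq_smul (i := 0) (j := 2) (by decide) c
      (funext (triForm_smul_mid a c _ _ _))

theorem Dform_eq_zero_of_dependent_three {v₃ v₃' : Fin 2 → R} (v₁ v₁' v₂ v₂' : Fin 2 → R)
    (h : ∃ c : R, v₃' = c • v₃ ∨ v₃ = c • v₃') : Dform a v₁ v₁' v₂ v₂' v₃ v₃' = 0 := by
  obtain ⟨c, rfl | rfl⟩ := h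
  · exact det_eq_zero_of_row_eq_smul (i := 3) (j := 0) (by decide) c
      (funext (triForm_smul_right a c _ _ _))
  · exact det_eq_zero_of_row_eq_smul (i := 0) (j := 3) (by decide) c
      (funext (triForm_smul_right a c _ _ _))

end Forms

section Kernel

variable {R : Type*} [CommRing R]

theorem det2_single_zero_ne_zero {v : Fin 2 → R} (hv : v 1 ≠ 0) : det2 v (Pi.single 0 1) ≠ 0 := by
  simpa [det2] using hv

variable [IsDomain R]

theorem exists_eq_mul_det2_of_sum_mul_eq_zero {v L : Fin 2 → R} (hv : Prime (v 1))
    (hv' : ¬ v 1 ∣ v 0) (h : ∑ p, v p * L p = 0) :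
    ∃ c, ∀ p, L p = c * det2 v (Pi.single p 1) := by
  rw [Fin.sum_univ_two] at h
  obtain ⟨c, hc⟩ : v 1 ∣ L 0 :=
    (hv.dvd_or_dvd ⟨-L 1, by linear_combination h⟩).resolve_left hv'
  have hL : L 1 = -c * v 0 :=
    mul_left_cancel₀ hv.ne_zero (by linear_combination h - v 0 * hc)
  refine ⟨-c, fun p => ?_⟩
  fin_cases p
  · simp [det2, hc, mul_comm]
  · simp [det2, hL]

theorem exists_sum_eq_mul_det2 {T : Fin 2 → Fin 2 → Fin 2 → R} {v₁ v₂ v₃ : Fin 2 → R}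
    (hv₁ : Prime (v₁ 1)) (hv₁' : ¬ v₁ 1 ∣ v₁ 0) (hv₂ : Prime (v₂ 1)) (hv₂' : ¬ v₂ 1 ∣ v₂ 0)
    (hv₃ : Prime (v₃ 1)) (hv₃' : ¬ v₃ 1 ∣ v₃ 0)
    (h₁ : ∀ q r, ∑ p, v₁ p * T p q r = 0) (h₂ : ∀ p r, ∑ q, v₂ q * T p q r = 0)
    (h₃ : ∀ p q, ∑ r, v₃ r * T p q r = 0) :
    ∃ G, ∀ u w x : Fin 2 → R,
      ∑ p, ∑ q, ∑ r, u p * w q * x r * T p q r = G * (det2 v₁ u * det2 v₂ w * det2 v₃ x) := by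
  choose c hc using fun q r => exists_eq_mul_det2_of_sum_mul_eq_zero hv₁ hv₁' (h₁ q r)
  have hc₂ (r : Fin 2) : ∑ q, v₂ q * c q r = 0 := by
    refine (mul_eq_zero.mp ?_).resolve_right (det2_single_zero_ne_zero hv₁.ne_zero)
    simpa only [hc, Finset.sum_mul, mul_assoc] using h₂ 0 r
  choose d hd using fun r => exists_eq_mul_det2_of_sum_mul_eq_zero hv₂ hv₂' (hc₂ r)
  have hd₃ : ∑ r, v₃ r * d r = 0 := by
    refine (mul_eq_zero.mp ?_).resolve_right (mul_ne_zero
      (det2_single_zero_ne_zero hv₂.ne_zero) (det2_single_zero_ne_zero hv₁.ne_zero))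
    simpa only [hc, hd, Finset.sum_mul, mul_assoc] using h₃ 0 0
  obtain ⟨G, hG⟩ := exists_eq_mul_det2_of_sum_mul_eq_zero hv₃ hv₃' hd₃
  refine ⟨G, fun u w x => ?_⟩
  simp [hc, hd, hG, det2, Fin.sum_univ_two]
  ring

end Kernel

theorem stmt19_general (F : Type) [Field F]
    (a : Fin 4 → Fin 2 → Fin 2 → Fin 2 → F) :
    (∀ v₁ v₁' v₂ v₂' v₃ v₃' : Fin 2 → F,
      ((∃ c : F, v₁' = c • v₁ ∨ v₁ = c • v₁') ∨
       (∃ c : F, v₂' = c • v₂ ∨ v₂ = c • v₂') ∨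
       (∃ c : F, v₃' = c • v₃ ∨ v₃ = c • v₃')) →
      Dform a v₁ v₁' v₂ v₂' v₃ v₃' = 0) ∧
    (det2 (fun p => (MvPolynomial.X ((0 : Fin 6), p) : MvPolynomial (Fin 6 × Fin 2) F))
          (fun p => MvPolynomial.X (1, p)) *
        det2 (fun p => MvPolynomial.X (2, p)) (fun p => MvPolynomial.X (3, p)) *
        det2 (fun p => MvPolynomial.X (4, p)) (fun p => MvPolynomial.X (5, p)) ∣
      Dform a (fun p => MvPolynomial.X (0, p)) (fun p => MvPolynomial.X (1, p))
        (fun p => MvPolynomial.X (2, p)) (fun p => MvPolynomial.X (3, p))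
        (fun p => MvPolynomial.X (4, p)) (fun p => MvPolynomial.X (5, p))) := by
  refine ⟨fun v₁ v₁' v₂ v₂' v₃ v₃' h => ?_, ?_⟩
  · rcases h with h | h | h
    exacts [Dform_eq_zero_of_dependent_one a _ _ _ _ h, Dform_eq_zero_of_dependent_two a _ _ _ _ h,
      Dform_eq_zero_of_dependent_three a _ _ _ _ h]
  let S := MvPolynomial (Fin 6 × Fin 2) F
  let v (i : Fin 6) (p : Fin 2) : S := MvPolynomial.X (i, p)
  have hv (i : Fin 6) : Prime (v i 1) := MvPolynomial.X_prime
  have hv' (i : Fin 6) : ¬ v i 1 ∣ v i 0 := MvPolynomial.X_dvd_X.not.mpr (by simp)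
  have hself (u : Fin 2 → S) : ∃ c : S, u = c • u ∨ u = c • u := ⟨1, .inl (one_smul _ u).symm⟩
  obtain ⟨G, hG⟩ := exists_sum_eq_mul_det2
    (T := fun p q r => Dform a (v 0) (Pi.single p 1) (v 2) (Pi.single q 1) (v 4) (Pi.single r 1))
    (hv 0) (hv' 0) (hv 2) (hv' 2) (hv 4) (hv' 4)
    (fun q r => by rw [← Dform_eq_sum_left, Dform_eq_zero_of_dependent_one a _ _ _ _ (hself _)])
    (fun p r => by rw [← Dform_eq_sum_mid, Dform_eq_zero_of_dependent_two a _ _ _ _ (hself _)])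
    (fun p q => by rw [← Dform_eq_sum_right, Dform_eq_zero_of_dependent_three a _ _ _ _ (hself _)])
  exact ⟨G, by rw [Dform_eq_sum, hG, mul_comm]⟩

/-- `D` vanishes whenever `vᵢ` and `vᵢ′` are linearly dependent for some `i`; hence,
as a polynomial in the coordinates of the six vectors, `D` is divisible by
`det(v₁,v₁′)·det(v₂,v₂′)·det(v₃,v₃′)`. -/
theorem stmt19 (F : Type) [Field F] [CharZero F]
    (a : Fin 4 → Fin 2 → Fin 2 → Fin 2 → F) :
    (∀ v₁ v₁' v₂ v₂' v₃ v₃' : Fin 2 → F,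
      ((∃ c : F, v₁' = c • v₁ ∨ v₁ = c • v₁') ∨
       (∃ c : F, v₂' = c • v₂ ∨ v₂ = c • v₂') ∨
       (∃ c : F, v₃' = c • v₃ ∨ v₃ = c • v₃')) →
      Dform a v₁ v₁' v₂ v₂' v₃ v₃' = 0) ∧
    (det2 (fun p => (MvPolynomial.X ((0 : Fin 6), p) : MvPolynomial (Fin 6 × Fin 2) F))
          (fun p => MvPolynomial.X (1, p)) *
        det2 (fun p => MvPolynomial.X (2, p)) (fun p => MvPolynomial.X (3, p)) *
        det2 (fun p => MvPolynomial.X (4, p)) (fun p => MvPolynomial.X (5, p)) ∣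
      Dform a (fun p => MvPolynomial.X (0, p)) (fun p => MvPolynomial.X (1, p))
        (fun p => MvPolynomial.X (2, p)) (fun p => MvPolynomial.X (3, p))
        (fun p => MvPolynomial.X (4, p)) (fun p => MvPolynomial.X (5, p))) :=
  stmt19_general F a
end
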